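/- Let c, ℓ, γ, D∞ be positive reals and 0 < ε < 1. Define F∞(x) = exp(-x²)/erf(x), G∞(x) = x + (γ(1-ε)√π/(2D∞)) · (1/F∞(x)), and G₁(x) = G∞(x)/F∞(x) for x > 0. Then the equation G₁(x) = D∞c/(ℓ√π) has a unique solution x = ξ∞ > 0. -/

import Mathlib

open Real Filter Set Topology

/-- The error function `erf x = (2/√π) ∫₀ˣ exp(-t²) dt`. -/
noncomputable def erf (x : ℝ) : ℝ := (2 / Real.sqrt π) * ∫ t in (0:ℝ)..x, Real.exp (-t ^ 2)

/-!
Clearing denominators, `G₁(x) = (x + k E(x)) E(x)` with `E(x) = 1/F∞(x) = erf x · exp(x²)` and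
`k = γ(1-ε)√π/(2D∞) > 0`. On `[0, ∞)` both `erf` and `exp(x²)` are nonnegative and strictly
increasing, hence so are `E` and `G₁`; moreover `G₁(0) = 0` and `G₁(x) ≥ E(1) x → ∞`. The
intermediate value theorem then gives exactly one positive solution for every positive right-hand
side.
-/

theorem intervalIntegrable_exp_neg_sq (a b : ℝ) :
    IntervalIntegrable (fun t => exp (-t ^ 2)) MeasureTheory.volume a b :=
  (by fun_prop : Continuous fun t : ℝ => exp (-t ^ 2)).intervalIntegrable a b

theorem continuous_erf : Continuous erf :=
  continuous_const.mul (intervalIntegral.continuous_primitive intervalIntegrable_exp_neg_sq 0)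

@[simp]
theorem erf_zero : erf 0 = 0 := by simp [erf]

theorem strictMono_erf : StrictMono erf := by
  intro a b hab
  have hsub : erf b - erf a = (2 / sqrt π) * ∫ t in a..b, exp (-t ^ 2) := by
    rw [erf, erf, ← mul_sub, intervalIntegral.integral_interval_sub_left
      (intervalIntegrable_exp_neg_sq 0 b) (intervalIntegrable_exp_neg_sq 0 a)]
  have hint : 0 < ∫ t in a..b, exp (-t ^ 2) :=
    intervalIntegral.intervalIntegral_pos_of_pos (intervalIntegrable_exp_neg_sq a b)
      (fun _ => exp_pos _) hab
  have : 0 < erf b - erf a := hsub ▸ mul_pos (by positivity) hint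
  linarith

theorem erf_nonneg {x : ℝ} (hx : 0 ≤ x) : 0 ≤ erf x :=
  erf_zero ▸ strictMono_erf.monotone hx

theorem erf_pos {x : ℝ} (hx : 0 < x) : 0 < erf x :=
  erf_zero ▸ strictMono_erf hx

theorem StrictMonoOn.mul_of_nonneg {s : Set ℝ} {f g : ℝ → ℝ} (hf : StrictMonoOn f s)
    (hg : StrictMonoOn g s) (hf₀ : ∀ x ∈ s, 0 ≤ f x) (hg₀ : ∀ x ∈ s, 0 ≤ g x) :
    StrictMonoOn (fun x => f x * g x) s := fun _ ha _ hb hab =>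
  mul_lt_mul'' (hf ha hb hab) (hg ha hb hab) (hf₀ _ ha) (hg₀ _ ha)

theorem existsUnique_pos_eq_of_strictMonoOn {f : ℝ → ℝ} (hcont : ContinuousOn f (Ici 0))
    (hmono : StrictMonoOn f (Ici 0)) (h₀ : f 0 = 0) (htop : Tendsto f atTop atTop) {y : ℝ}
    (hy : 0 < y) : ∃! x, 0 < x ∧ f x = y := by
  have hy' : y ∈ Ici (f 0) := by rw [h₀]; exact hy.le
  obtain ⟨x, hx, rfl⟩ := intermediate_value_Ici hcont htop hy'
  have hx₀ : x ≠ 0 := by rintro rfl; exact hy.ne' h₀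
  refine ⟨x, ⟨lt_of_le_of_ne hx (Ne.symm hx₀), rfl⟩, fun x' ⟨hx', hfx'⟩ => ?_⟩
  exact hmono.injOn (le_of_lt hx' : x' ∈ Ici 0) hx hfx'

/-- `1 / F∞`. -/
noncomputable def erfExpSq (x : ℝ) : ℝ := erf x * exp (x ^ 2)

@[fun_prop]
theorem continuous_erfExpSq : Continuous erfExpSq :=
  continuous_erf.mul (by fun_prop)

theorem erfExpSq_zero : erfExpSq 0 = 0 := by simp [erfExpSq]

theorem erfExpSq_nonneg {x : ℝ} (hx : 0 ≤ x) : 0 ≤ erfExpSq x :=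
  mul_nonneg (erf_nonneg hx) (exp_pos _).le

theorem strictMonoOn_erfExpSq : StrictMonoOn erfExpSq (Ici 0) :=
  (strictMono_erf.strictMonoOn _).mul_of_nonneg
    (fun _ ha _ _ hab => exp_lt_exp.2 (pow_lt_pow_left₀ hab ha two_ne_zero))
    (fun _ hx => erf_nonneg hx) (fun _ _ => (exp_pos _).le)

/-- `G₁` written in terms of `E = 1/F∞`, with `k = γ(1-ε)√π/(2D∞)`. -/
noncomputable def interfaceFn (k x : ℝ) : ℝ := (x + k * erfExpSq x) * erfExpSq x

section interfaceFn

variable {k : ℝ}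

theorem continuous_interfaceFn : Continuous (interfaceFn k) := by
  unfold interfaceFn; fun_prop

theorem interfaceFn_zero : interfaceFn k 0 = 0 := by simp [interfaceFn, erfExpSq_zero]

theorem strictMonoOn_interfaceFn (hk : 0 ≤ k) : StrictMonoOn (interfaceFn k) (Ici 0) :=
  StrictMonoOn.mul_of_nonneg
    (fun _ ha _ hb hab => add_lt_add_of_lt_of_le hab
      (mul_le_mul_of_nonneg_left (strictMonoOn_erfExpSq.monotoneOn ha hb hab.le) hk))
    strictMonoOn_erfExpSq
    (fun _ hx => add_nonneg hx (mul_nonneg hk (erfExpSq_nonneg hx)))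
    (fun _ hx => erfExpSq_nonneg hx)

theorem tendsto_interfaceFn_atTop (hk : 0 ≤ k) : Tendsto (interfaceFn k) atTop atTop := by
  have hE₁ : 0 < erfExpSq 1 := mul_pos (erf_pos one_pos) (exp_pos _)
  refine tendsto_atTop_mono' _ ?_ (tendsto_id.atTop_mul_const hE₁)
  filter_upwards [eventually_ge_atTop 1] with x hx
  have hE : erfExpSq 1 ≤ erfExpSq x :=
    strictMonoOn_erfExpSq.monotoneOn (mem_Ici.2 zero_le_one) (mem_Ici.2 (zero_le_one.trans hx)) hx
  have hkE : 0 ≤ k * erfExpSq x := mul_nonneg hk (hE₁.le.trans hE)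
  calc x * erfExpSq 1 ≤ x * erfExpSq x := mul_le_mul_of_nonneg_left hE (by linarith)
    _ ≤ interfaceFn k x := by unfold interfaceFn; nlinarith [mul_nonneg hkE (hE₁.le.trans hE)]

end interfaceFn

theorem stmt_8_general (c ℓ γ Dinf ε : ℝ) (hc : 0 < c) (hℓ : 0 < ℓ) (hγ : 0 < γ)
    (hD : 0 < Dinf) (hε1 : ε < 1)
    (Finf Ginf G₁ : ℝ → ℝ)
    (hFinf : ∀ x, Finf x = Real.exp (-x ^ 2) / erf x)
    (hGinf : ∀ x, Ginf x = x + (γ * (1 - ε) * Real.sqrt π / (2 * Dinf)) * (1 / Finf x))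
    (hG₁ : ∀ x, G₁ x = Ginf x / Finf x) :
    ∃! ξinf : ℝ, ξinf > 0 ∧ G₁ ξinf = Dinf * c / (ℓ * Real.sqrt π) := by
  set k := γ * (1 - ε) * sqrt π / (2 * Dinf)
  have hk : 0 ≤ k := by
    have : 0 < 1 - ε := by linarith
    positivity
  have hG₁_eq : ∀ x, G₁ x = interfaceFn k x := fun x => by
    have hinv : 1 / Finf x = erfExpSq x := by
      rw [hFinf, one_div, inv_div, erfExpSq, exp_neg, div_inv_eq_mul]
    rw [hG₁, hGinf, hinv, div_eq_mul_one_div, hinv, interfaceFn]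
  simp only [hG₁_eq, gt_iff_lt]
  exact existsUnique_pos_eq_of_strictMonoOn continuous_interfaceFn.continuousOn
    (strictMonoOn_interfaceFn hk) interfaceFn_zero (tendsto_interfaceFn_atTop hk) (by positivity)

/-- The equation `G₁(x) = D∞ c/(ℓ√π)` determining the interface coefficient `ξ∞` for the
mushy-zone model with prescribed temperature `-D∞` at the fixed face has a unique
positive solution. -/
theorem stmt_8 (c ℓ γ Dinf ε : ℝ) (hc : 0 < c) (hℓ : 0 < ℓ) (hγ : 0 < γ)
    (hD : 0 < Dinf) (hε0 : 0 < ε) (hε1 : ε < 1)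
    (Finf Ginf G₁ : ℝ → ℝ)
    (hFinf : ∀ x, Finf x = Real.exp (-x ^ 2) / erf x)
    (hGinf : ∀ x, Ginf x = x + (γ * (1 - ε) * Real.sqrt π / (2 * Dinf)) * (1 / Finf x))
    (hG₁ : ∀ x, G₁ x = Ginf x / Finf x) :
    ∃! ξinf : ℝ, ξinf > 0 ∧ G₁ ξinf = Dinf * c / (ℓ * Real.sqrt π) :=
  stmt_8_general c ℓ γ Dinf ε hc hℓ hγ hD hε1 Finf Ginf G₁ hFinf hGinf hG₁
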